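/- For every odd k ≥ 5, the independence number of the second strong power of the k-cycle satisfies α(C_k^2) = ((k−1)/2)² + ⌊(k−1)/4⌋ > α(C_k)², and hence Θ(C_k) > α(C_k). -/

import Mathlib

/-!
Write `k = 2n + 1`. If `S` is independent in `C_k ⊠ H`, the points of `S` in two consecutive
rows `i, i + 1` have pairwise distinct and non-adjacent second coordinates, so they number at
most `α(H)`; every row lies in exactly two such pairs, whence `2 α(C_k ⊠ H) ≤ k α(H)`. With
`H = C_k` and `α(C_k) = n` this gives `α(C_k ⊠ C_k) ≤ ⌊(2n + 1) n / 2⌋ = n² + ⌊n/2⌋`, and an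
explicit configuration attains the bound. Since `√α(G ⊠ G) ≤ Θ(G)`, the strict inequality
`α(C_k)² < α(C_k ⊠ C_k)` for `n ≥ 2` yields `α(C_k) < Θ(C_k)`.
-/

namespace Paper

def strongProd {V W : Type*} (G : SimpleGraph V) (H : SimpleGraph W) : SimpleGraph (V × W) :=
  SimpleGraph.fromRel (fun x y =>
    (x.1 = y.1 ∨ G.Adj x.1 y.1) ∧ (x.2 = y.2 ∨ H.Adj x.2 y.2))

def strongPow {V : Type*} (G : SimpleGraph V) (k : ℕ) : SimpleGraph (Fin k → V) :=
  SimpleGraph.fromRel (fun x y => ∀ i, x i = y i ∨ G.Adj (x i) (y i))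

noncomputable def indepNum {V : Type*} [Fintype V] (G : SimpleGraph V) : ℕ :=
  sSup {n | ∃ s : Finset V, (∀ a ∈ s, ∀ b ∈ s, a ≠ b → ¬ G.Adj a b) ∧ s.card = n}

noncomputable def shannonCapacity {V : Type*} [Fintype V] (G : SimpleGraph V) : ℝ :=
  ⨆ k : ℕ, (indepNum (strongPow G (k + 1)) : ℝ) ^ ((1 : ℝ) / (k + 1))

noncomputable def lovaszTheta {V : Type*} [Fintype V] (G : SimpleGraph V) : ℝ :=
  sSup {x : ℝ | ∃ B : Matrix V V ℝ, B.PosSemidef ∧ B.trace = 1 ∧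
    (∀ i j, G.Adj i j → B i j = 0) ∧ x = ∑ i, ∑ j, B i j}

noncomputable def fracIndepNum {V : Type*} [Fintype V] (G : SimpleGraph V) : ℝ :=
  sSup {x : ℝ | ∃ f : V → ℝ, (∀ v, 0 ≤ f v) ∧
    (∀ s : Finset V, G.IsClique (s : Set V) → ∑ v ∈ s, f v ≤ 1) ∧ x = ∑ v, f v}

def Universal {V : Type*} [Fintype V] (G : SimpleGraph V) : Prop :=
  ∀ (W : Type) [Fintype W] (H : SimpleGraph W),
    indepNum (strongProd G H) = indepNum G * indepNum H

def sigmaUnion {ι : Type*} {V : ι → Type*} (G : ∀ i, SimpleGraph (V i)) :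
    SimpleGraph (Σ i, V i) :=
  SimpleGraph.fromRel (fun x y =>
    ∃ i, ∃ a b : V i, (G i).Adj a b ∧ x = ⟨i, a⟩ ∧ y = ⟨i, b⟩)

def piStrongProd {ι : Type*} {V : ι → Type*} (G : ∀ i, SimpleGraph (V i)) :
    SimpleGraph (∀ i, V i) :=
  SimpleGraph.fromRel (fun x y => ∀ i, x i = y i ∨ (G i).Adj (x i) (y i))

def tadpole (k l : ℕ) : SimpleGraph (Fin (k + l)) :=
  SimpleGraph.fromRel (fun x y =>
    ((x : ℕ) < k ∧ (y : ℕ) < k ∧ ((x : ℕ) + 1) % k = (y : ℕ)) ∨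
    (k ≤ (x : ℕ) ∧ (y : ℕ) = (x : ℕ) + 1) ∨
    ((x : ℕ) = 0 ∧ (y : ℕ) = k))


open Finset SimpleGraph

section IndependenceNumber

variable {V W ι : Type*}

theorem indepNum_eq_simpleGraph_indepNum [Fintype V] (G : SimpleGraph V) :
    indepNum G = G.indepNum := by
  unfold indepNum SimpleGraph.indepNum
  congr 1
  ext n
  exact ⟨fun ⟨s, hs, hn⟩ => ⟨s, ⟨fun a ha b hb => hs a ha b hb, hn⟩⟩,
    fun ⟨s, hs⟩ => ⟨s, fun a ha b hb => hs.isIndepSet ha hb, hs.card_eq⟩⟩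

theorem indepNum_le_card [Fintype V] (G : SimpleGraph V) : G.indepNum ≤ Fintype.card V := by
  obtain ⟨s, hs⟩ := G.exists_isNIndepSet_indepNum
  exact hs.card_eq ▸ s.card_le_univ

theorem card_le_indepNum_of_eq_or_adj_imp_eq [Finite V] (G : SimpleGraph V) (f : ι → V)
    (T : Finset ι) (h : ∀ p ∈ T, ∀ q ∈ T, f p = f q ∨ G.Adj (f p) (f q) → p = q) :
    #T ≤ G.indepNum := by
  classical
  have hinj : Set.InjOn f T := fun p hp q hq hpq => h p hp q hq (Or.inl hpq)
  rw [← card_image_of_injOn hinj]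
  refine IsIndepSet.card_le_indepNum fun a ha b hb hab hadj => hab ?_
  obtain ⟨p, hp, rfl⟩ := mem_image.1 ha
  obtain ⟨q, hq, rfl⟩ := mem_image.1 hb
  rw [h p hp q hq (Or.inr hadj)]

theorem indepNum_le_of_iso [Finite V] [Finite W] {G : SimpleGraph V} {H : SimpleGraph W}
    (e : G ≃g H) : G.indepNum ≤ H.indepNum := by
  obtain ⟨s, hs⟩ := G.exists_isNIndepSet_indepNum
  rw [← hs.card_eq]
  refine card_le_indepNum_of_eq_or_adj_imp_eq H e s fun p hp q hq hpq => ?_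
  by_contra hne
  rcases hpq with heq | hadj
  · exact hne (e.injective heq)
  · exact hs.isIndepSet hp hq hne (e.map_adj_iff.1 hadj)

end IndependenceNumber

section StrongProduct

variable {V W : Type*}

theorem strongProd_adj (G : SimpleGraph V) (H : SimpleGraph W) (p q : V × W) :
    (strongProd G H).Adj p q ↔
      p ≠ q ∧ (p.1 = q.1 ∨ G.Adj p.1 q.1) ∧ (p.2 = q.2 ∨ H.Adj p.2 q.2) := by
  rw [strongProd, fromRel_adj, eq_comm (a := q.1), eq_comm (a := q.2),
    G.adj_comm q.1, H.adj_comm q.2, or_self]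

theorem eq_or_strongProd_adj_iff (G : SimpleGraph V) (H : SimpleGraph W) (p q : V × W) :
    p = q ∨ (strongProd G H).Adj p q ↔
      (p.1 = q.1 ∨ G.Adj p.1 q.1) ∧ (p.2 = q.2 ∨ H.Adj p.2 q.2) := by
  rw [strongProd_adj]
  by_cases hpq : p = q <;> simp [hpq]

theorem strongPow_adj (G : SimpleGraph V) (n : ℕ) (x y : Fin n → V) :
    (strongPow G n).Adj x y ↔ x ≠ y ∧ ∀ i, x i = y i ∨ G.Adj (x i) (y i) := by
  simp only [strongPow, fromRel_adj, eq_comm (a := y _), G.adj_comm (y _), or_self]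

def strongPowTwoIso (G : SimpleGraph V) : strongPow G 2 ≃g strongProd G G where
  toEquiv := piFinTwoEquiv fun _ => V
  map_rel_iff' {x y} := by
    simp only [strongPow_adj, strongProd_adj, Fin.forall_fin_two, piFinTwoEquiv_apply,
      Ne, Prod.ext_iff, funext_iff]

end StrongProduct

section ShannonCapacity

variable {V : Type*} [Fintype V]

theorem rpow_indepNum_strongPow_le_card (G : SimpleGraph V) (m : ℕ) :
    (indepNum (strongPow G (m + 1)) : ℝ) ^ ((1 : ℝ) / (m + 1)) ≤ Fintype.card V := by
  have hcard : (indepNum (strongPow G (m + 1)) : ℝ) ≤ (Fintype.card V : ℝ) ^ (m + 1) := by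
    rw [indepNum_eq_simpleGraph_indepNum]
    exact_mod_cast (indepNum_le_card _).trans_eq (by simp)
  calc (indepNum (strongPow G (m + 1)) : ℝ) ^ ((1 : ℝ) / (m + 1))
      ≤ ((Fintype.card V : ℝ) ^ (m + 1)) ^ ((↑(m + 1) : ℝ)⁻¹) := by
        rw [one_div, Nat.cast_succ]
        exact Real.rpow_le_rpow (Nat.cast_nonneg _) hcard (by positivity)
    _ = Fintype.card V := Real.pow_rpow_inv_natCast (Nat.cast_nonneg _) m.succ_ne_zero

theorem rpow_indepNum_strongPow_le_shannonCapacity (G : SimpleGraph V) (m : ℕ) :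
    (indepNum (strongPow G (m + 1)) : ℝ) ^ ((1 : ℝ) / (m + 1)) ≤ shannonCapacity G :=
  le_ciSup (f := fun m : ℕ => (indepNum (strongPow G (m + 1)) : ℝ) ^ ((1 : ℝ) / (m + 1)))
    ⟨_, Set.forall_mem_range.2 (rpow_indepNum_strongPow_le_card G)⟩ m

theorem sqrt_indepNum_strongProd_le_shannonCapacity (G : SimpleGraph V) :
    √(indepNum (strongProd G G) : ℝ) ≤ shannonCapacity G := by
  have hiso : indepNum (strongProd G G) ≤ indepNum (strongPow G 2) := by
    simp only [indepNum_eq_simpleGraph_indepNum]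
    exact indepNum_le_of_iso (strongPowTwoIso G).symm
  calc √(indepNum (strongProd G G) : ℝ)
      ≤ (indepNum (strongPow G 2) : ℝ) ^ ((1 : ℝ) / 2) := by
        rw [Real.sqrt_eq_rpow]
        exact Real.rpow_le_rpow (Nat.cast_nonneg _) (by exact_mod_cast hiso) (by norm_num)
    _ ≤ shannonCapacity G := by
        simpa [one_add_one_eq_two] using rpow_indepNum_strongPow_le_shannonCapacity G 1

theorem indepNum_lt_shannonCapacity (G : SimpleGraph V)
    (h : indepNum G ^ 2 < indepNum (strongProd G G)) :
    (indepNum G : ℝ) < shannonCapacity G :=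
  ((Real.lt_sqrt (Nat.cast_nonneg _)).2 (by exact_mod_cast h)).trans_le
    (sqrt_indepNum_strongProd_le_shannonCapacity G)

end ShannonCapacity

section Cycle

variable {k : ℕ}

theorem mod_eq_or_mod_add_eq_of_lt_two_mul {x : ℕ} (h : x < 2 * k) :
    x < k ∧ x % k = x ∨ k ≤ x ∧ x % k + k = x := by
  rcases lt_or_ge x k with hx | hx
  · exact .inl ⟨hx, Nat.mod_eq_of_lt hx⟩
  · refine .inr ⟨hx, ?_⟩
    rw [Nat.mod_eq_sub_mod hx, Nat.mod_eq_of_lt (by omega)]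
    omega

theorem eq_or_cycleGraph_adj_iff (a b : Fin k) :
    a = b ∨ (cycleGraph k).Adj a b ↔
      a.val = b.val ∨ a.val + 1 = b.val ∨ b.val + 1 = a.val ∨
        (a.val = 0 ∧ b.val + 1 = k) ∨ (b.val = 0 ∧ a.val + 1 = k) := by
  have ha := a.isLt
  have hb := b.isLt
  have hab := mod_eq_or_mod_add_eq_of_lt_two_mul (k := k) (x := k - b.val + a.val) (by omega)
  have hba := mod_eq_or_mod_add_eq_of_lt_two_mul (k := k) (x := k - a.val + b.val) (by omega)
  rw [Fin.ext_iff, cycleGraph_adj', Fin.val_sub, Fin.val_sub]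
  omega

theorem cycleGraph_adj_add_one [NeZero k] (hk : 2 ≤ k) (i : Fin k) :
    (cycleGraph k).Adj i (i + 1) := by
  obtain ⟨n, rfl⟩ : ∃ n, k = n + 2 := ⟨k - 2, by omega⟩
  exact cycleGraph_adj.2 (.inr (add_sub_cancel_left i 1))

theorem two_mul_card_le_of_isIndepSet_cycleGraph (hk : 2 ≤ k) {s : Finset (Fin k)}
    (hs : (cycleGraph k).IsIndepSet s) : 2 * #s ≤ k := by
  have : NeZero k := ⟨by omega⟩
  set t := s.map (addRightEmbedding 1)
  have hdisj : Disjoint s t := by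
    refine disjoint_left.2 fun v hv hvt => ?_
    obtain ⟨w, hw, rfl⟩ := mem_map.1 hvt
    exact hs hw hv (cycleGraph_adj_add_one hk w).ne (cycleGraph_adj_add_one hk w)
  calc 2 * #s = #(s ∪ t) := by rw [card_union_of_disjoint hdisj, card_map]; ring
    _ ≤ k := (card_le_univ _).trans_eq (Fintype.card_fin k)

theorem indepNum_cycleGraph (hk : 2 ≤ k) : (cycleGraph k).indepNum = k / 2 := by
  refine le_antisymm ?_ ?_
  · obtain ⟨s, hs⟩ := (cycleGraph k).exists_isNIndepSet_indepNum
    rw [← hs.card_eq]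
    have := two_mul_card_le_of_isIndepSet_cycleGraph hk hs.isIndepSet
    omega
  · have : NeZero k := ⟨by omega⟩
    simpa using card_le_indepNum_of_eq_or_adj_imp_eq (cycleGraph k)
      (fun j => Fin.ofNat k (2 * j)) (range (k / 2)) fun j hj j' hj' h => by
        rw [mem_range] at hj hj'
        rw [eq_or_cycleGraph_adj_iff, Fin.val_ofNat, Fin.val_ofNat,
          Nat.mod_eq_of_lt (by omega), Nat.mod_eq_of_lt (by omega)] at h
        omega

end Cycle

section StrongProductWithCycle

variable {V W : Type*}

theorem card_filter_fst_mem_le_indepNum [Finite W] [DecidableEq V] {G : SimpleGraph V}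
    {H : SimpleGraph W} {S : Finset (V × W)} (hS : (strongProd G H).IsIndepSet S)
    {R : Finset V} (hR : G.IsClique (R : Set V)) : #{p ∈ S | p.1 ∈ R} ≤ H.indepNum := by
  refine card_le_indepNum_of_eq_or_adj_imp_eq H Prod.snd _ fun p hp q hq hpq => ?_
  rw [mem_filter] at hp hq
  by_contra hne
  refine hS hp.1 hq.1 hne ((strongProd_adj G H p q).2 ⟨hne, ?_, hpq⟩)
  exact (eq_or_ne p.1 q.1).imp_right (hR hp.2 hq.2)

theorem two_mul_indepNum_strongProd_cycleGraph_le {k : ℕ} (hk : 2 ≤ k) (H : SimpleGraph W)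
    [Finite W] : 2 * (strongProd (cycleGraph k) H).indepNum ≤ k * H.indepNum := by
  classical
  have : NeZero k := ⟨by omega⟩
  obtain ⟨S, hS⟩ := (strongProd (cycleGraph k) H).exists_isNIndepSet_indepNum
  rw [← hS.card_eq]
  have hpair (i : Fin k) : #{p ∈ S | p.1 = i} + #{p ∈ S | p.1 = i + 1} ≤ H.indepNum := by
    have hadj := cycleGraph_adj_add_one hk i
    have hdisj : Disjoint {p ∈ S | p.1 = i} {p ∈ S | p.1 = i + 1} :=
      disjoint_filter.2 fun p _ h h' => hadj.ne (h.symm.trans h')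
    rw [← card_union_of_disjoint hdisj, ← filter_or]
    simpa using card_filter_fst_mem_le_indepNum hS.isIndepSet
      (R := {i, i + 1}) (by simpa using isClique_pair.2 fun _ => hadj)
  have hrows : ∑ i, #{p ∈ S | p.1 = i} = #S :=
    (card_eq_sum_card_fiberwise fun p _ => mem_univ p.1).symm
  have hshift : ∑ i, #{p ∈ S | p.1 = i + 1} = #S :=
    hrows ▸ Fintype.sum_equiv (Equiv.addRight 1) _ _ fun _ => rfl
  calc 2 * #S = ∑ i, (#{p ∈ S | p.1 = i} + #{p ∈ S | p.1 = i + 1}) := by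
        rw [sum_add_distrib, hrows, hshift, two_mul]
    _ ≤ ∑ _ : Fin k, H.indepNum := sum_le_sum fun i _ => hpair i
    _ = k * H.indepNum := by simp

end StrongProductWithCycle

section Construction

/-- Lifts to `ℕ × ℕ` of the points of a large independent set of `C_{2n+1} ⊠ C_{2n+1}`:
row `2j` holds `⌊n/2⌋` points and row `2j+1` holds `⌈n/2⌉` points, two apart, placed so that
any two consecutive rows together form a maximum independent set of `C_{2n+1}`. -/
def cycleSquareCoord (n : ℕ) : (ℕ × ℕ) ⊕ (ℕ × ℕ) → ℕ × ℕ
  | .inl (j, t) => (2 * j, j + 2 * t)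
  | .inr (j, t) => (2 * j + 1, j + 2 * (n / 2) + 1 + 2 * t)

def cycleSquarePoint (n : ℕ) (p : (ℕ × ℕ) ⊕ (ℕ × ℕ)) : Fin (2 * n + 1) × Fin (2 * n + 1) :=
  Prod.map (Fin.ofNat _) (Fin.ofNat _) (cycleSquareCoord n p)

def cycleSquareIndex (n : ℕ) : Finset ((ℕ × ℕ) ⊕ (ℕ × ℕ)) :=
  (range (n + 1) ×ˢ range (n / 2)).disjSum (range n ×ˢ range ((n + 1) / 2))

theorem card_cycleSquareIndex (n : ℕ) : #(cycleSquareIndex n) = n ^ 2 + n / 2 := by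
  simp only [cycleSquareIndex, card_disjSum, card_product, card_range]
  obtain ⟨m, rfl | rfl⟩ := n.even_or_odd'
  · rw [show (2 * m + 1) / 2 = m by omega, Nat.mul_div_cancel_left m two_pos]
    ring
  · rw [show (2 * m + 1) / 2 = m by omega, show (2 * m + 1 + 1) / 2 = m + 1 by omega]
    ring

theorem cycleSquareCoord_lt {n : ℕ} {p : (ℕ × ℕ) ⊕ (ℕ × ℕ)} (hp : p ∈ cycleSquareIndex n) :
    (cycleSquareCoord n p).1 < 2 * n + 1 ∧ (cycleSquareCoord n p).2 < 2 * (2 * n + 1) := by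
  rcases p with ⟨j, t⟩ | ⟨j, t⟩ <;>
    simp only [cycleSquareIndex, inl_mem_disjSum, inr_mem_disjSum, mem_product,
      mem_range] at hp <;>
    simp only [cycleSquareCoord] <;> omega

theorem eq_of_cycleSquarePoint_eq_or_adj {n : ℕ} {p q : (ℕ × ℕ) ⊕ (ℕ × ℕ)}
    (hp : p ∈ cycleSquareIndex n) (hq : q ∈ cycleSquareIndex n)
    (h : cycleSquarePoint n p = cycleSquarePoint n q ∨
      (strongProd (cycleGraph (2 * n + 1)) (cycleGraph (2 * n + 1))).Adj
        (cycleSquarePoint n p) (cycleSquarePoint n q)) :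
    p = q := by
  obtain ⟨hp₁, hp₂⟩ := cycleSquareCoord_lt hp
  obtain ⟨hq₁, hq₂⟩ := cycleSquareCoord_lt hq
  have hp₂' := mod_eq_or_mod_add_eq_of_lt_two_mul hp₂
  have hq₂' := mod_eq_or_mod_add_eq_of_lt_two_mul hq₂
  simp only [eq_or_strongProd_adj_iff, eq_or_cycleGraph_adj_iff, cycleSquarePoint,
    Prod.map_fst, Prod.map_snd, Fin.val_ofNat, Nat.mod_eq_of_lt hp₁, Nat.mod_eq_of_lt hq₁] at h
  rcases p with ⟨j, t⟩ | ⟨j, t⟩ <;> rcases q with ⟨j', t'⟩ | ⟨j', t'⟩ <;>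
    simp only [cycleSquareIndex, inl_mem_disjSum, inr_mem_disjSum, mem_product,
      mem_range] at hp hq <;>
    simp only [cycleSquareCoord] at h hp₂' hq₂' ⊢ <;>
    simp only [reduceCtorEq, Sum.inl.injEq, Sum.inr.injEq, Prod.mk.injEq] <;>
    omega

theorem le_indepNum_strongProd_cycleGraph (n : ℕ) :
    n ^ 2 + n / 2 ≤ (strongProd (cycleGraph (2 * n + 1)) (cycleGraph (2 * n + 1))).indepNum :=
  card_cycleSquareIndex n ▸ card_le_indepNum_of_eq_or_adj_imp_eq _ _ _
    fun _ hp _ hq h => eq_of_cycleSquarePoint_eq_or_adj hp hq h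

end Construction

theorem indepNum_cycle_strong_square (k : ℕ) (hk : 5 ≤ k) (hodd : Odd k) :
    indepNum (strongProd (SimpleGraph.cycleGraph k) (SimpleGraph.cycleGraph k))
      = ((k - 1) / 2) ^ 2 + (k - 1) / 4 ∧
    indepNum (SimpleGraph.cycleGraph k) ^ 2
      < indepNum (strongProd (SimpleGraph.cycleGraph k) (SimpleGraph.cycleGraph k)) ∧
    (indepNum (SimpleGraph.cycleGraph k) : ℝ) < shannonCapacity (SimpleGraph.cycleGraph k) := by
  obtain ⟨n, rfl⟩ := hodd
  rw [show (2 * n + 1 - 1) / 2 = n by omega, show (2 * n + 1 - 1) / 4 = n / 2 by omega]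
  have hcycle : indepNum (cycleGraph (2 * n + 1)) = n := by
    rw [indepNum_eq_simpleGraph_indepNum, indepNum_cycleGraph (by omega)]
    omega
  have hsquare : indepNum (strongProd (cycleGraph (2 * n + 1)) (cycleGraph (2 * n + 1)))
      = n ^ 2 + n / 2 := by
    rw [indepNum_eq_simpleGraph_indepNum]
    refine le_antisymm ?_ (le_indepNum_strongProd_cycleGraph n)
    have hupper := two_mul_indepNum_strongProd_cycleGraph_le (k := 2 * n + 1) (by omega)
      (cycleGraph (2 * n + 1))
    rw [indepNum_cycleGraph (by omega), show (2 * n + 1) / 2 = n by omega,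
      show (2 * n + 1) * n = 2 * n ^ 2 + n by ring] at hupper
    omega
  have hlt : indepNum (cycleGraph (2 * n + 1)) ^ 2
      < indepNum (strongProd (cycleGraph (2 * n + 1)) (cycleGraph (2 * n + 1))) := by
    rw [hcycle, hsquare]
    omega
  exact ⟨hsquare, hlt, indepNum_lt_shannonCapacity _ hlt⟩

end Paper
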